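/- arXiv:1801.02428 — 3 statements merged into one kernel-verified Lean document; each statement's English description precedes it below -/
import Mathlib

section
/- For a real number a with 0 < a < 1/2 (ensuring convergence), ∑_{n=1}^∞ (n+1)·(2a)_n / ((a+3/2)_n · 2^n) · H_n = (a + 1/2)·(ψ(a + 1/2) − ψ(1/2)), where ψ is the digamma function. -/
/-- The `n`-th harmonic number `∑_{k=1}^n 1/k`. -/
noncomputable def H (n : ℕ) : ℝ := ∑ k ∈ Finset.range n, (1 : ℝ) / (k + 1)

/-- The Pochhammer symbol `(x)_n = x(x+1)⋯(x+n-1)` over `ℝ`. -/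
noncomputable def poch (x : ℝ) (n : ℕ) : ℝ := (ascPochhammer ℝ n).eval x

/-- The digamma function `ψ = Γ'/Γ`. -/
noncomputable def digamma (x : ℝ) : ℝ := deriv Real.Gamma x / Real.Gamma x

open Finset Filter Topology

namespace Stmt2Aux

/-- the product `∏_{j<k} (b+j)/(b+2j+1)` -/
noncomputable def w (b : ℝ) (k : ℕ) : ℝ := ∏ j ∈ Finset.range k, (b + j) / (b + 2*j + 1)

lemma w_zero (b : ℝ) : w b 0 = 1 := by simp [w]

lemma w_succ (b : ℝ) (k : ℕ) : w b (k+1) = w b k * ((b + k) / (b + 2*k + 1)) := by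
  simp [w, Finset.prod_range_succ, div_mul_div_comm]

lemma w_one (b : ℝ) (hb : 0 < b) : w b 1 = b / (b+1) := by
  simp [w]

lemma w_pos {b : ℝ} (hb : 0 < b) (k : ℕ) : 0 < w b k := by
  refine Finset.prod_pos fun j _ => div_pos (by positivity) (by positivity)

lemma factor_le {b : ℝ} (hb : 0 < b) (j : ℕ) :
    (b + j) / (b + 2*j + 1) ≤ (b+1)/(b+2) := by
  rw [div_le_div_iff₀ (by positivity) (by positivity)]
  have : (0:ℝ) ≤ j := by positivity
  nlinarith

lemma w_le_geom {b : ℝ} (hb : 0 < b) (k : ℕ) :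
    w b (k+1) ≤ w b 1 * ((b+1)/(b+2))^k := by
  induction k with
  | zero => simp
  | succ k ih =>
    rw [w_succ]
    calc w b (k+1) * ((b + (k+1:ℕ)) / (b + 2*(k+1:ℕ) + 1))
        ≤ (w b 1 * ((b+1)/(b+2))^k) * ((b+1)/(b+2)) := by
          apply mul_le_mul ih (factor_le hb (k+1)) (le_of_lt (div_pos (by positivity) (by positivity)))
          exact mul_nonneg (w_pos hb 1).le (pow_nonneg (by positivity) k)
      _ = w b 1 * ((b+1)/(b+2))^(k+1) := by ring

lemma r_nonneg {b : ℝ} (hb : 0 < b) : (0:ℝ) ≤ (b+1)/(b+2) := by positivity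

lemma r_lt_one {b : ℝ} (hb : 0 < b) : (b+1)/(b+2) < 1 := by
  rw [div_lt_one (by positivity)]; linarith

lemma w_le_pow {b : ℝ} (hb : 0 < b) (k : ℕ) :
    w b (k+1) ≤ ((b+1)/(b+2))^k := by
  refine (w_le_geom hb k).trans ?_
  have h1 : w b 1 ≤ 1 := by
    rw [w_one b hb, div_le_one (by positivity)]; linarith
  nlinarith [pow_nonneg (r_nonneg hb) k]

lemma w_tendsto_zero {b : ℝ} (hb : 0 < b) :
    Tendsto (fun k : ℕ => w b (k+1)) atTop (𝓝 0) := by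
  have h := tendsto_pow_atTop_nhds_zero_of_lt_one (r_nonneg hb) (r_lt_one hb)
  refine squeeze_zero (fun k => (w_pos hb (k+1)).le) (fun k => w_le_pow hb k) h

lemma w_sub (b : ℝ) {k : ℕ} (hb : 0 < b) :
    w b k - w b (k+1) = w b k * ((k+1) / (b + 2*k + 1)) := by
  rw [w_succ]
  have h : (b + 2*(k:ℝ) + 1) ≠ 0 := by positivity
  field_simp
  ring

lemma w_shift {b : ℝ} (hb : 0 < b) (k : ℕ) :
    w (b+2) k = w b k * ((b+k) * (b+k+1) / (b * (b + 2*k + 1))) := by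
  induction k with
  | zero => simp [w_zero]; field_simp
  | succ k ih =>
    rw [w_succ, w_succ, ih]
    have h1 : (b + 2*(k:ℝ) + 1) ≠ 0 := by positivity
    have h2 : (b + 2*(k:ℝ) + 3) ≠ 0 := by positivity
    have h3 : (b:ℝ) ≠ 0 := ne_of_gt hb
    push_cast
    field_simp
    ring


/-- `T b = ∑_{k≥1} w b k / k` -/
noncomputable def T (b : ℝ) : ℝ := ∑' k : ℕ, w b (k+1) / (k+1)

lemma summable_T {b : ℝ} (hb : 0 < b) : Summable (fun k : ℕ => w b (k+1) / ((k:ℝ)+1)) := by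
  refine Summable.of_nonneg_of_le (fun k => div_nonneg (w_pos hb _).le (by positivity)) (fun k => ?_)
    (summable_geometric_of_lt_one (r_nonneg hb) (r_lt_one hb))
  calc w b (k+1) / ((k:ℝ)+1) ≤ w b (k+1) / 1 := by
        apply div_le_div_of_nonneg_left (w_pos hb (k+1)).le one_pos
        · push_cast; linarith [Nat.cast_nonneg (α := ℝ) k]
    _ = w b (k+1) := div_one _
    _ ≤ ((b+1)/(b+2))^k := w_le_pow hb k

lemma hasSum_T {b : ℝ} (hb : 0 < b) :
    HasSum (fun k : ℕ => w b (k+1) / ((k:ℝ)+1)) (T b) := (summable_T hb).hasSum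

lemma T_nonneg {b : ℝ} (hb : 0 < b) : 0 ≤ T b :=
  tsum_nonneg (fun k => div_nonneg (w_pos hb _).le (by positivity))

lemma hasSum_tel {b : ℝ} (hb : 0 < b) :
    HasSum (fun k : ℕ => w b (k+1) - w b (k+2)) (w b 1) := by
  have hnn : ∀ k : ℕ, 0 ≤ w b (k+1) - w b (k+2) := by
    intro k
    rw [w_sub b hb]
    exact mul_nonneg (w_pos hb _).le (by positivity)
  rw [hasSum_iff_tendsto_nat_of_nonneg hnn]
  have hps : ∀ n : ℕ, ∑ i ∈ Finset.range n, (w b (i+1) - w b (i+2)) = w b 1 - w b (n+1) := by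
    intro n
    have := Finset.sum_range_sub' (fun i => w b (i+1)) n
    simpa using this
  simp only [hps]
  have := (w_tendsto_zero hb).const_sub (w b 1)
  simpa using this

lemma T_rec {b : ℝ} (hb : 0 < b) : T (b+2) = T b + 1/(b+1) := by
  have hpt : ∀ k : ℕ, w (b+2) (k+1) / ((k:ℝ)+1)
      = w b (k+1) / ((k:ℝ)+1) + (1/b) * (w b (k+1) - w b (k+2)) := by
    intro k
    have h1 := w_shift hb (k+1)
    have h2 := w_sub b (k := k+1) hb
    push_cast at h1 h2 ⊢
    rw [h1, h2]
    have hb' : (b:ℝ) ≠ 0 := ne_of_gt hb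
    have hd : (b + 2*((k:ℝ)+1) + 1) ≠ 0 := by positivity
    have hk : ((k:ℝ)+1) ≠ 0 := by positivity
    field_simp
    ring
  have hs : HasSum (fun k : ℕ => w (b+2) (k+1) / ((k:ℝ)+1)) (T b + (1/b) * w b 1) := by
    have := (hasSum_T hb).add ((hasSum_tel hb).mul_left (1/b))
    exact HasSum.congr_fun this (fun k => hpt k)
  have h := hs.tsum_eq
  rw [T, h, w_one b hb]
  have hb' : (b:ℝ) ≠ 0 := ne_of_gt hb
  field_simp

lemma T_mono {b b' : ℝ} (hb : 0 < b) (hbb : b ≤ b') : T b ≤ T b' := by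
  have hb' : 0 < b' := lt_of_lt_of_le hb hbb
  refine Summable.tsum_le_tsum (fun k => ?_) (summable_T hb) (summable_T hb')
  apply div_le_div_of_nonneg_right ?_ (by positivity)
  · unfold w
    refine Finset.prod_le_prod (fun j _ => by positivity) (fun j _ => ?_)
    rw [div_le_div_iff₀ (by positivity) (by positivity)]
    have : (0:ℝ) ≤ j := by positivity
    nlinarith

lemma T_le {b : ℝ} (hb : 0 < b) : T b ≤ b * (b+2) := by
  have h1 : T b ≤ ∑' k : ℕ, w b 1 * ((b+1)/(b+2))^k := by
    refine Summable.tsum_le_tsum (fun k => ?_) (summable_T hb) ?_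
    · calc w b (k+1) / ((k:ℝ)+1) ≤ w b (k+1) / 1 := by
            apply div_le_div_of_nonneg_left (w_pos hb (k+1)).le one_pos
            push_cast; linarith [Nat.cast_nonneg (α := ℝ) k]
        _ = w b (k+1) := div_one _
        _ ≤ w b 1 * ((b+1)/(b+2))^k := w_le_geom hb k
    · exact (summable_geometric_of_lt_one (r_nonneg hb) (r_lt_one hb)).mul_left _
  rw [tsum_mul_left, tsum_geometric_of_lt_one (r_nonneg hb) (r_lt_one hb)] at h1
  have he : (1 - (b+1)/(b+2))⁻¹ = b + 2 := by
    rw [show (1 - (b+1)/(b+2)) = 1/(b+2) by field_simp; ring]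
    simp
  rw [he, w_one b hb] at h1
  refine h1.trans ?_
  have h2 : b/(b+1) ≤ b := by
    rw [div_le_iff₀ (by positivity)]; nlinarith
  exact mul_le_mul_of_nonneg_right h2 (by linarith)


/-- General squeeze: a monotone `g` on positives satisfying `g(u+1) = g u + e u`
with `e` antitone nonneg and `e (y+N) → 0` has
`g x - g y = ∑_j (e (y+j) - e (x+j))` whenever `0 < y ≤ x ≤ y+1`. -/
lemma squeeze_rec (g e : ℝ → ℝ)
    (hmono : ∀ {u v : ℝ}, 0 < u → u ≤ v → g u ≤ g v)
    (hrec : ∀ {u : ℝ}, 0 < u → g (u + 1) = g u + e u)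
    (he : ∀ {u v : ℝ}, 0 < u → u ≤ v → e v ≤ e u)
    {x y : ℝ} (hy : 0 < y) (hyx : y ≤ x) (hxy : x ≤ y + 1)
    (hlim : Tendsto (fun N : ℕ => e (y + N)) atTop (𝓝 0)) :
    HasSum (fun j : ℕ => e (y + j) - e (x + j)) (g x - g y) := by
  have hx : 0 < x := lt_of_lt_of_le hy hyx
  have hgN : ∀ (u : ℝ), 0 < u → ∀ N : ℕ, g (u + N) = g u + ∑ j ∈ Finset.range N, e (u + j) := by
    intro u hu N
    induction N with
    | zero => simp
    | succ N ih =>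
      have hpos : 0 < u + N := by positivity
      have : g (u + (N+1:ℕ)) = g (u + N) + e (u + N) := by
        have h := hrec hpos
        push_cast
        rw [show u + ((N:ℝ)+1) = u + (N:ℝ) + 1 by ring]
        exact h
      rw [this, ih, Finset.sum_range_succ, add_assoc]
  have hnn : ∀ j : ℕ, 0 ≤ e (y + j) - e (x + j) := by
    intro j
    have h1 : (0:ℝ) < y + j := by positivity
    have h2 : y + j ≤ x + j := by linarith
    linarith [he h1 h2]
  rw [hasSum_iff_tendsto_nat_of_nonneg hnn]
  have hps : ∀ N : ℕ, ∑ j ∈ Finset.range N, (e (y + j) - e (x + j))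
      = (g x - g y) - (g (x + N) - g (y + N)) := by
    intro N
    rw [Finset.sum_sub_distrib]
    have h1 := hgN y hy N
    have h2 := hgN x hx N
    linarith
  simp only [hps]
  have hb1 : ∀ N : ℕ, 0 ≤ g (x + N) - g (y + N) := by
    intro N
    have : (0:ℝ) < y + N := by positivity
    linarith [hmono this (by linarith : y + (N:ℝ) ≤ x + N)]
  have hb2 : ∀ N : ℕ, g (x + N) - g (y + N) ≤ e (y + N) := by
    intro N
    have hyN : (0:ℝ) < y + N := by positivity
    have hxN : (0:ℝ) < x + N := by positivity
    have h1 : g (x + N) ≤ g (y + N + 1) := hmono hxN (by linarith)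
    have h2 : g (y + N + 1) = g (y + N) + e (y + N) := hrec hyN
    linarith
  have hz : Tendsto (fun N : ℕ => g (x + N) - g (y + N)) atTop (𝓝 0) :=
    squeeze_zero hb1 hb2 hlim
  have := hz.const_sub (g x - g y)
  simpa using this


lemma diffGamma {x : ℝ} (hx : 0 < x) : DifferentiableAt ℝ Real.Gamma x := by
  refine Real.differentiableAt_Gamma (fun m => ?_)
  have : -(m:ℝ) ≤ 0 := neg_nonpos.mpr (Nat.cast_nonneg m)
  intro h
  rw [← h] at this
  linarith

lemma digamma_rec {x : ℝ} (hx : 0 < x) : digamma (x+1) = digamma x + 1/x := by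
  have hx1 : (0:ℝ) < x + 1 := by linarith
  have h1 : HasDerivAt (fun y : ℝ => Real.Gamma (y+1)) (deriv Real.Gamma (x+1) * 1) x :=
    by have h := HasDerivAt.comp x ((diffGamma hx1).hasDerivAt) ((hasDerivAt_id x).add_const 1); exact h
  have h2 : HasDerivAt (fun y : ℝ => y * Real.Gamma y)
      (1 * Real.Gamma x + x * deriv Real.Gamma x) x :=
    (hasDerivAt_id x).mul (diffGamma hx).hasDerivAt
  have heq : (fun y : ℝ => Real.Gamma (y+1)) =ᶠ[𝓝 x] (fun y : ℝ => y * Real.Gamma y) := by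
    filter_upwards [Ioi_mem_nhds hx] with y hy
    exact Real.Gamma_add_one (ne_of_gt hy)
  have h3 : HasDerivAt (fun y : ℝ => y * Real.Gamma y) (deriv Real.Gamma (x+1) * 1) x :=
    h1.congr_of_eventuallyEq heq.symm
  have hder : deriv Real.Gamma (x+1) = Real.Gamma x + x * deriv Real.Gamma x := by
    have := h3.unique h2
    linarith [this]
  have hG : Real.Gamma x ≠ 0 := (Real.Gamma_pos_of_pos hx).ne'
  have hxne : x ≠ 0 := ne_of_gt hx
  rw [digamma, digamma, hder, Real.Gamma_add_one hxne]
  field_simp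
  ring

lemma digamma_mono : ∀ {u v : ℝ}, 0 < u → u ≤ v → digamma u ≤ digamma v := by
  intro u v hu huv
  have hv : 0 < v := lt_of_lt_of_le hu huv
  have hfd : ∀ x ∈ Set.Ioi (0:ℝ), DifferentiableAt ℝ (Real.log ∘ Real.Gamma) x := by
    intro x hx
    have hx' : (0:ℝ) < x := hx
    exact (diffGamma hx').log (Real.Gamma_pos_of_pos hx').ne'
  have hm := Real.convexOn_log_Gamma.monotoneOn_deriv hfd
  have hder : ∀ {x : ℝ}, 0 < x → deriv (Real.log ∘ Real.Gamma) x = digamma x := by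
    intro x hx
    have h := ((diffGamma hx).hasDerivAt).log (Real.Gamma_pos_of_pos hx).ne'
    exact h.deriv
  have := hm (Set.mem_Ioi.mpr hu) (Set.mem_Ioi.mpr hv) huv
  rwa [hder hu, hder hv] at this

lemma digamma_hasSum {x y : ℝ} (hy : 0 < y) (hyx : y ≤ x) (hxy : x ≤ y + 1) :
    HasSum (fun j : ℕ => 1/(y + j) - 1/(x + j)) (digamma x - digamma y) := by
  have h := squeeze_rec digamma (fun u => 1/u)
    (fun {u v} hu huv => digamma_mono hu huv)
    (fun {u} hu => digamma_rec hu)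
    (fun {u v} hu huv => one_div_le_one_div_of_le hu huv)
    hy hyx hxy ?_
  · exact h
  · have h1 : Tendsto (fun N : ℕ => y + (N:ℝ)) atTop atTop :=
      tendsto_atTop_add_const_left _ _ tendsto_natCast_atTop_atTop
    have := h1.inv_tendsto_atTop
    simp only [one_div]; exact this


lemma summable_inv_sq : Summable (fun j : ℕ => 1 / ((j:ℝ)+1)^2) := by
  have h : Summable (fun j : ℕ => 1 / ((j:ℝ))^2) :=
    Real.summable_one_div_nat_pow.mpr one_lt_two
  have := (summable_nat_add_iff 1).mpr h
  refine this.congr (fun j => ?_)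
  push_cast
  ring_nf

noncomputable def K : ℝ := ∑' j : ℕ, 1 / ((j:ℝ)+1)^2

lemma diff_eq {c b : ℝ} (hc : 0 ≤ c) (hb : c ≤ b) (j : ℕ) :
    1/(c + 2*(j:ℝ) + 1) - 1/(b + 2*j + 1) = (b - c) / ((c + 2*j + 1) * (b + 2*j + 1)) := by
  have h1 : (0:ℝ) < c + 2*j + 1 := by positivity
  have h2 : (0:ℝ) < b + 2*j + 1 := by linarith
  rw [div_sub_div _ _ (ne_of_gt h1) (ne_of_gt h2)]
  congr 1
  ring

lemma denom_ge {c b : ℝ} (hc : 0 ≤ c) (hb : c ≤ b) (j : ℕ) :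
    ((j:ℝ)+1)^2 ≤ (c + 2*j + 1) * (b + 2*j + 1) := by
  nlinarith [Nat.cast_nonneg (α := ℝ) j]

lemma summable_diff_series {c b : ℝ} (hc : 0 ≤ c) (hb : c ≤ b) :
    Summable (fun j : ℕ => 1/(c + 2*j + 1) - 1/(b + 2*j + 1)) := by
  refine Summable.of_nonneg_of_le (fun j => ?_) (fun j => ?_) (summable_inv_sq.mul_left (b+1))
  · rw [diff_eq hc hb j]
    have h1 : (0:ℝ) < c + 2*j + 1 := by positivity
    have h2 : (0:ℝ) < b + 2*j + 1 := by linarith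
    exact div_nonneg (by linarith) (by positivity)
  · rw [diff_eq hc hb j]
    have h1 : (0:ℝ) < c + 2*j + 1 := by positivity
    have h2 : (0:ℝ) < b + 2*j + 1 := by linarith
    calc (b - c) / ((c + 2*(j:ℝ) + 1) * (b + 2*j + 1))
        ≤ (b+1) / (((j:ℝ)+1)^2) := by
          apply div_le_div₀ (by linarith) (by linarith) (by positivity) (denom_ge hc hb j)
      _ = (b+1) * (1/(((j:ℝ)+1)^2)) := by rw [mul_one_div]

lemma tsum_diff_le {c b : ℝ} (hc : 0 ≤ c) (hb : c ≤ b) :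
    (∑' j : ℕ, (1/(c + 2*j + 1) - 1/(b + 2*j + 1))) ≤ (b - c) * K := by
  calc (∑' j : ℕ, (1/(c + 2*j + 1) - 1/(b + 2*j + 1)))
      ≤ ∑' j : ℕ, (b - c) * (1/(((j:ℝ)+1)^2)) := by
        refine Summable.tsum_le_tsum (fun j => ?_) (summable_diff_series hc hb)
          (summable_inv_sq.mul_left _)
        rw [diff_eq hc hb j, mul_one_div]
        apply div_le_div₀ (by linarith) le_rfl (by positivity) (denom_ge hc hb j)
    _ = (b - c) * K := by rw [tsum_mul_left]; rfl

/-- The key evaluation: `T b` equals the digamma-type series. -/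
lemma T_eq_D {b : ℝ} (hb : 0 < b) (hb1 : b ≤ 1) :
    T b = ∑' j : ℕ, (1/(2*(j:ℝ) + 1) - 1/(b + 2*j + 1)) := by
  set D : ℝ := ∑' j : ℕ, (1/(2*(j:ℝ) + 1) - 1/(b + 2*j + 1)) with hD
  -- squeeze applied with g = T ∘ double
  have key : ∀ c : ℝ, 0 < c → c ≤ b →
      HasSum (fun j : ℕ => 1/(c + 2*j + 1) - 1/(b + 2*j + 1)) (T b - T c) := by
    intro c hc hcb
    have h := squeeze_rec (fun x => T (2*x)) (fun u => 1/(2*u+1))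
      (fun {u v} hu huv => T_mono (by linarith) (by linarith))
      (fun {u} hu => by
        show T (2*(u+1)) = T (2*u) + 1/(2*u+1)
        rw [show 2*(u+1) = 2*u + 2 by ring]
        exact T_rec (by linarith))
      (fun {u v} hu huv => by
        apply one_div_le_one_div_of_le (by linarith) (by linarith))
      (y := c/2) (x := b/2) (by linarith) (by linarith) (by linarith)
      ?hlim
    case hlim =>
      have h1 : Tendsto (fun N : ℕ => 2*(c/2 + (N:ℝ)) + 1) atTop atTop := by
        apply tendsto_atTop_add_const_right
        apply Tendsto.const_mul_atTop two_pos
        apply tendsto_atTop_add_const_left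
        exact tendsto_natCast_atTop_atTop
      have := h1.inv_tendsto_atTop
      simp only [one_div]; exact this
    have h' : HasSum (fun j : ℕ => 1/(2*(c/2 + (j:ℝ))+1) - 1/(2*(b/2 + (j:ℝ))+1))
        (T (2*(b/2)) - T (2*(c/2))) := h
    rw [show 2*(b/2) = b by ring, show 2*(c/2) = c by ring] at h'
    refine HasSum.congr_fun h' (fun j => ?_)
    rw [show 2*(c/2 + (j:ℝ))+1 = c + 2*j + 1 by ring,
       show 2*(b/2 + (j:ℝ))+1 = b + 2*j + 1 by ring]
  -- D is the c → 0 limit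
  have hK0 : 0 ≤ K := tsum_nonneg (fun j => by positivity)
  have habs : ∀ n : ℕ, |T b - D| ≤ (b/(n+1)) * (3 + K) := by
    intro n
    set c : ℝ := b/(n+1) with hcdef
    have hc : 0 < c := by positivity
    have hcb : c ≤ b := by
      rw [hcdef, div_le_iff₀ (by positivity)]
      nlinarith [Nat.cast_nonneg (α := ℝ) n]
    have hkey := (key c hc hcb).tsum_eq
    -- D - (T b - T c) = ∑ (1/(2j+1) - 1/(c+2j+1))
    have hsum1 : Summable (fun j : ℕ => 1/(2*(j:ℝ) + 1) - 1/(b + 2*j + 1)) := by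
      have h0 := summable_diff_series (c := 0) le_rfl hb.le
      refine h0.congr (fun j => ?_)
      norm_num
    have hsum2 := summable_diff_series hc.le hcb
    have hsum3 := summable_diff_series (c := 0) le_rfl hc.le
    have hD2 : D - (T b - T c) = ∑' j : ℕ, (1/(2*(j:ℝ)+1) - 1/(c + 2*j + 1)) := by
      rw [← hkey, hD, ← Summable.tsum_sub hsum1 hsum2]
      congr 1
      funext j
      ring
    have hb3 : D - (T b - T c) ≤ c * K := by
      rw [hD2]
      calc (∑' j : ℕ, (1/(2*(j:ℝ)+1) - 1/(c + 2*j + 1)))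
          = ∑' j : ℕ, (1/((0:ℝ) + 2*(j:ℝ) + 1) - 1/(c + 2*j + 1)) := by
            congr 1; funext j; norm_num
        _ ≤ (c - 0) * K := tsum_diff_le le_rfl hc.le
        _ = c * K := by ring
    have hb4 : 0 ≤ D - (T b - T c) := by
      rw [hD2]
      refine tsum_nonneg (fun j => ?_)
      have h1 : (0:ℝ) < 2*j + 1 := by positivity
      have := one_div_le_one_div_of_le h1 (by linarith : 2*(j:ℝ)+1 ≤ c + 2*j + 1)
      linarith
    have hTc1 : 0 ≤ T c := T_nonneg hc
    have hTc2 : T c ≤ 3 * c := by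
      refine (T_le hc).trans ?_
      nlinarith [hc.le, hcb, hb1]
    -- T b - D = T c - (D - (T b - T c))
    have : T b - D = T c - (D - (T b - T c)) := by ring
    rw [abs_le]
    constructor <;> nlinarith [mul_nonneg hc.le hK0]
  have hlim : Tendsto (fun n : ℕ => (b/(n+1)) * (3 + K)) atTop (𝓝 0) := by
    rw [show (0:ℝ) = 0 * (3 + K) by ring]
    apply Tendsto.mul_const
    apply Tendsto.const_div_atTop
    apply tendsto_atTop_add_const_right
    exact tendsto_natCast_atTop_atTop
  have habs0 : |T b - D| ≤ 0 := ge_of_tendsto' hlim habs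
  have := abs_nonneg (T b - D)
  have h0 : |T b - D| = 0 := le_antisymm habs0 this
  have := abs_eq_zero.mp h0
  linarith [this]


lemma H_zero : H 0 = 0 := by simp [H]

lemma H_succ (n : ℕ) : H (n+1) = H n + 1/((n:ℝ)+1) := by
  simp [H, Finset.sum_range_succ]

lemma H_nonneg (n : ℕ) : 0 ≤ H n := by
  refine Finset.sum_nonneg (fun k _ => by positivity)

lemma H_le (n : ℕ) : H n ≤ n := by
  calc H n ≤ ∑ k ∈ Finset.range n, (1:ℝ) := by
        refine Finset.sum_le_sum (fun k _ => ?_)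
        rw [div_le_one (by positivity)]
        linarith [Nat.cast_nonneg (α := ℝ) k]
    _ = n := by simp

lemma poch_prod (x : ℝ) (n : ℕ) : poch x n = ∏ j ∈ Finset.range n, (x + j) := by
  induction n with
  | zero => simp [poch]
  | succ n ih =>
    rw [Finset.prod_range_succ, ← ih, poch, poch, ascPochhammer_succ_eval]

lemma poch_denom (a : ℝ) (n : ℕ) :
    poch (a + 3/2) (n+1) * 2^(n+1) = ∏ j ∈ Finset.range (n+1), (2*a + 2*j + 3) := by
  rw [poch_prod]
  have h2 : (2:ℝ)^(n+1) = ∏ _j ∈ Finset.range (n+1), (2:ℝ) := by simp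
  rw [h2, ← Finset.prod_mul_distrib]
  refine Finset.prod_congr rfl (fun j _ => by ring)

-- w b (n+2) in terms of the two products
lemma w_prod_eq {a : ℝ} (ha : 0 < a) (n : ℕ) :
    w (2*a) (n+2) = (∏ j ∈ Finset.range (n+1), (2*a + j)) * (2*a + n + 1)
      / ((∏ j ∈ Finset.range (n+1), (2*a + 2*j + 3)) * (2*a + 1)) := by
  set b := 2*a with hbdef
  have hb : 0 < b := by positivity
  have h1 : w b (n+2) = (∏ j ∈ Finset.range (n+2), (b + j)) / (∏ j ∈ Finset.range (n+2), (b + 2*j + 1)) := by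
    rw [w, Finset.prod_div_distrib]
  have h2 : ∏ j ∈ Finset.range (n+2), (b + (j:ℝ)) = (∏ j ∈ Finset.range (n+1), (b + j)) * (b + n + 1) := by
    rw [Finset.prod_range_succ]
    push_cast
    ring
  have h3 : ∏ j ∈ Finset.range (n+2), (b + 2*(j:ℝ) + 1)
      = (∏ j ∈ Finset.range (n+1), (b + 2*j + 3)) * (b + 1) := by
    rw [Finset.prod_range_succ']
    congr 1
    · refine Finset.prod_congr rfl (fun j _ => ?_)
      push_cast
      ring
    · norm_num
  rw [h1, h2, h3]

lemma term_eq {a : ℝ} (ha : 0 < a) (n : ℕ) :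
    ((n:ℝ) + 2) * poch (2*a) (n+1) / (poch (a + 3/2) (n+1) * 2^(n+1)) * H (n+1)
      = (2*a+1) * (w (2*a) (n+1) - w (2*a) (n+2)) * H (n+1) := by
  set b := 2*a with hbdef
  have hb : 0 < b := by positivity
  congr 1
  have hsub : w b (n+1) - w b (n+2) = w b (n+2) * (((n:ℝ)+2) / (b + n + 1)) := by
    have e1 := w_sub b (k := n+1) hb
    have e2 := w_succ b (n+1)
    push_cast at e1 e2
    have hd1 : (b + 2*((n:ℝ)+1) + 1) ≠ 0 := by positivity
    have hd2 : (b + (n:ℝ) + 1) ≠ 0 := by positivity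
    rw [e1, e2]
    field_simp
    ring
  rw [hsub, w_prod_eq ha n, poch_denom, poch_prod]
  have hP : (0:ℝ) < ∏ j ∈ Finset.range (n+1), (b + 2*(j:ℝ) + 3) :=
    Finset.prod_pos (fun j _ => by positivity)
  have hd2 : (b + (n:ℝ) + 1) ≠ 0 := by positivity
  have hb1 : (b + 1) ≠ 0 := by positivity
  rw [hbdef] at *
  field_simp

lemma abel_partial {b : ℝ} (hb : 0 < b) (N : ℕ) :
    ∑ n ∈ Finset.range N, (w b (n+1) - w b (n+2)) * H (n+1)
      = (∑ n ∈ Finset.range N, w b (n+1) / ((n:ℝ)+1)) - w b (N+1) * H N := by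
  induction N with
  | zero => simp [H_zero]
  | succ N ih =>
    rw [Finset.sum_range_succ, ih, Finset.sum_range_succ, H_succ]
    ring

lemma wH_tendsto {b : ℝ} (hb : 0 < b) :
    Tendsto (fun N : ℕ => w b (N+1) * H N) atTop (𝓝 0) := by
  have hr : ‖(b+1)/(b+2)‖ < 1 := by
    rw [Real.norm_eq_abs, abs_of_nonneg (r_nonneg hb)]
    exact r_lt_one hb
  have hs : Summable (fun N : ℕ => (N:ℝ)^1 * ((b+1)/(b+2))^N) :=
    summable_pow_mul_geometric_of_norm_lt_one 1 hr
  have hz := hs.tendsto_atTop_zero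
  refine squeeze_zero (fun N => mul_nonneg (w_pos hb _).le (H_nonneg N)) (fun N => ?_) hz
  calc w b (N+1) * H N ≤ ((b+1)/(b+2))^N * N := by
        apply mul_le_mul (w_le_pow hb N) (H_le N) (H_nonneg N) (pow_nonneg (r_nonneg hb) N)
    _ = (N:ℝ)^1 * ((b+1)/(b+2))^N := by ring

lemma hasSum_LHS {b : ℝ} (hb : 0 < b) :
    HasSum (fun n : ℕ => (b+1) * (w b (n+1) - w b (n+2)) * H (n+1)) ((b+1) * T b) := by
  have hnn : ∀ n : ℕ, 0 ≤ (b+1) * (w b (n+1) - w b (n+2)) * H (n+1) := by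
    intro n
    have h := w_sub b (k := n+1) hb
    have : 0 ≤ w b (n+1) - w b (n+2) := by
      rw [h]
      exact mul_nonneg (w_pos hb _).le (by positivity)
    exact mul_nonneg (mul_nonneg (by linarith) this) (H_nonneg _)
  rw [hasSum_iff_tendsto_nat_of_nonneg hnn]
  have hps : ∀ N : ℕ, ∑ n ∈ Finset.range N, (b+1) * (w b (n+1) - w b (n+2)) * H (n+1)
      = (b+1) * ((∑ n ∈ Finset.range N, w b (n+1) / ((n:ℝ)+1)) - w b (N+1) * H N) := by
    intro N
    rw [← abel_partial hb N, Finset.mul_sum]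
    refine Finset.sum_congr rfl (fun n _ => by ring)
  simp only [hps]
  have h1 := (hasSum_T hb).tendsto_sum_nat
  have h2 := wH_tendsto hb
  have := (h1.sub h2).const_mul (b+1)
  simpa using this


end Stmt2Aux

open Stmt2Aux Filter Topology in
theorem stmt2 (a : ℝ) (ha : 0 < a) (ha' : a < 1/2) :
    ∑' n : ℕ, ((n : ℝ) + 2) * poch (2*a) (n+1) / (poch (a + 3/2) (n+1) * 2 ^ (n+1)) * H (n+1)
      = (a + 1/2) * (digamma (a + 1/2) - digamma (1/2)) := by
  have hb : 0 < 2*a := by linarith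
  have hb1 : 2*a ≤ 1 := by linarith
  -- left side
  have hL := hasSum_LHS hb
  have hL' : HasSum (fun n : ℕ => ((n : ℝ) + 2) * poch (2*a) (n+1)
      / (poch (a + 3/2) (n+1) * 2 ^ (n+1)) * H (n+1)) ((2*a+1) * T (2*a)) :=
    HasSum.congr_fun hL (fun n => term_eq ha n)
  rw [hL'.tsum_eq]
  -- right side
  have hψ := digamma_hasSum (y := 1/2) (x := a+1/2) (by norm_num) (by linarith) (by linarith)
  have hDs : Summable (fun j : ℕ => 1/(2*(j:ℝ) + 1) - 1/(2*a + 2*j + 1)) := by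
    have h0 := summable_diff_series (c := 0) le_rfl hb.le
    refine h0.congr (fun j => ?_)
    norm_num
  have hD2 : HasSum (fun j : ℕ => 2 * (1/(2*(j:ℝ) + 1) - 1/(2*a + 2*j + 1)))
      (2 * ∑' j : ℕ, (1/(2*(j:ℝ) + 1) - 1/(2*a + 2*j + 1))) := hDs.hasSum.mul_left 2
  have heq : ∀ j : ℕ, 1/((1:ℝ)/2 + j) - 1/(a + 1/2 + j)
      = 2 * (1/(2*(j:ℝ) + 1) - 1/(2*a + 2*j + 1)) := by
    intro j
    have h1 : ((1:ℝ)/2 + j) ≠ 0 := by positivity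
    have h2 : (a + 1/2 + (j:ℝ)) ≠ 0 := by positivity
    have h3 : (2*(j:ℝ) + 1) ≠ 0 := by positivity
    have h4 : (2*a + 2*(j:ℝ) + 1) ≠ 0 := by positivity
    field_simp
    ring
  have hψ' : HasSum (fun j : ℕ => 1/((1:ℝ)/2 + j) - 1/(a + 1/2 + j))
      (2 * ∑' j : ℕ, (1/(2*(j:ℝ) + 1) - 1/(2*a + 2*j + 1))) :=
    HasSum.congr_fun hD2 heq
  have hval : digamma (a + 1/2) - digamma (1/2)
      = 2 * ∑' j : ℕ, (1/(2*(j:ℝ) + 1) - 1/(2*a + 2*j + 1)) := by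
    have := hψ.unique hψ'
    convert this using 3 <;> norm_num
  rw [hval, ← T_eq_D hb hb1]
  ring
end

section
/- For every natural number n ≥ 1, ∫_0^1 (1 − ((1−z)/2)^n − ((1+z)/2)^n) / (1 − z²) dz = (1/2)·H_{n−1}, where H_m = ∑_{k=1}^m 1/k. -/
theorem one_sub_pow_sub_pow_eq_mul_sum {R : Type*} [CommRing R] {a b : R} (hab : a + b = 1)
    (m : ℕ) :
    1 - a ^ (m + 1) - b ^ (m + 1) = a * b * ∑ j ∈ Finset.range m, (a ^ j + b ^ j) := by
  induction m with
  | zero => simp only [Finset.sum_range_zero, mul_zero, zero_add, pow_one]; linear_combination -hab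
  | succ m ih =>
    rw [Finset.sum_range_succ]
    linear_combination ih - (a ^ (m + 1) + b ^ (m + 1)) * hab

theorem integral_half_pow_add_half_pow (j : ℕ) :
    ∫ z in (0 : ℝ)..1, (((1 - z) / 2) ^ j + ((1 + z) / 2) ^ j) = 2 / (j + 1) := by
  have hleft : ∫ z in (0 : ℝ)..1, ((1 - z) / 2) ^ j = 2 * ∫ u in (0 : ℝ)..1 / 2, u ^ j := by
    simp_rw [show ∀ z : ℝ, (1 - z) / 2 = 1 / 2 - z / 2 by intro z; ring]
    rw [intervalIntegral.integral_comp_sub_div (fun u : ℝ => u ^ j) two_ne_zero]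
    norm_num
  have hright :
      ∫ z in (0 : ℝ)..1, ((1 + z) / 2) ^ j = 2 * ∫ u in (1 / 2 : ℝ)..1, u ^ j := by
    simp_rw [show ∀ z : ℝ, (1 + z) / 2 = 1 / 2 + z / 2 by intro z; ring]
    rw [intervalIntegral.integral_comp_add_div (fun u : ℝ => u ^ j) two_ne_zero]
    norm_num
  rw [intervalIntegral.integral_add ((by fun_prop : Continuous _).intervalIntegrable _ _)
      ((by fun_prop : Continuous _).intervalIntegrable _ _), hleft, hright, ← mul_add,
    intervalIntegral.integral_add_adjacent_intervals
      (intervalIntegral.intervalIntegrable_pow j) (intervalIntegral.intervalIntegrable_pow j),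
    integral_pow]
  field_simp
  simp

theorem div_one_sub_sq_eq_sum {z : ℝ} (hz : z ^ 2 ≠ 1) (m : ℕ) :
    (1 - ((1 - z) / 2) ^ (m + 1) - ((1 + z) / 2) ^ (m + 1)) / (1 - z ^ 2)
      = 1 / 4 * ∑ j ∈ Finset.range m, (((1 - z) / 2) ^ j + ((1 + z) / 2) ^ j) := by
  rw [one_sub_pow_sub_pow_eq_mul_sum (by ring), div_eq_iff (sub_ne_zero.mpr hz.symm)]
  ring

theorem stmt15 (n : ℕ) (hn : 1 ≤ n) :
    ∫ z in (0:ℝ)..1, (1 - ((1 - z)/2) ^ n - ((1 + z)/2) ^ n) / (1 - z^2)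
      = (1/2) * H (n - 1) := by
  obtain ⟨m, rfl⟩ := Nat.exists_eq_add_of_le' hn
  have hae : ∀ᵐ z : ℝ, z ∈ Set.uIoc 0 1 →
      (1 - ((1 - z) / 2) ^ (m + 1) - ((1 + z) / 2) ^ (m + 1)) / (1 - z ^ 2)
        = 1 / 4 * ∑ j ∈ Finset.range m, (((1 - z) / 2) ^ j + ((1 + z) / 2) ^ j) := by
    filter_upwards [MeasureTheory.Measure.ae_ne MeasureTheory.volume 1] with z hz1 hz
    rw [Set.uIoc_of_le zero_le_one] at hz
    exact div_one_sub_sq_eq_sum (by nlinarith [lt_of_le_of_ne hz.2 hz1, hz.1]) m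
  rw [intervalIntegral.integral_congr_ae hae, intervalIntegral.integral_const_mul,
    intervalIntegral.integral_finsetSum
      fun j _ => (by fun_prop : Continuous _).intervalIntegrable _ _]
  simp only [integral_half_pow_add_half_pow, H, Nat.add_sub_cancel, Finset.mul_sum]
  exact Finset.sum_congr rfl fun j _ => by ring
end

section
/- For every natural number n ≥ 1, ∫_0^1 [1/2 − (1/(1+z))·(4z/(1+z)²)^n] / (1 − z) dz = (1/4)·(H_n − ln 4), where H_n = ∑_{k=1}^n 1/k. -/
/-!
With `w z = 4z/(1+z)²` one has `1 - w z = ((1-z)/(1+z))²`, so telescoping `1 - wⁿ` splits the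
integrand into `-1/(2(1+z))` plus `∑_{k<n} wᵏ (1-z)/(1+z)³`. Since `w' = 4(1-z)/(1+z)³` and
`w` maps `[0,1]` onto `[0,1]`, the `k`-th summand integrates to `∫₀¹ tᵏ/4 dt = 1/(4(k+1))`,
while the first term gives `-(log 2)/2 = -(log 4)/4`.
-/

open MeasureTheory intervalIntegral Real

lemma div_one_sub_eq_sum (n : ℕ) {z : ℝ} (h1 : 1 + z ≠ 0) (h2 : 1 - z ≠ 0) :
    (1/2 - (1/(1 + z)) * (4*z/(1 + z)^2) ^ n) / (1 - z)
      = -(1/2) * (1/(1+z)) + ∑ k ∈ Finset.range n, (4*z/(1 + z)^2)^k * (1-z)/(1+z)^3 := by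
  induction n with
  | zero =>
    simp only [pow_zero, Finset.range_zero, Finset.sum_empty, add_zero, mul_one]
    field_simp
    ring
  | succ n ih =>
    rw [Finset.sum_range_succ, ← add_assoc, ← ih, pow_succ]
    field_simp
    ring

lemma hasDerivAt_four_mul_div_one_add_sq {z : ℝ} (hz : 1 + z ≠ 0) :
    HasDerivAt (fun z : ℝ => 4*z/(1+z)^2) (4*(1-z)/(1+z)^3) z := by
  have hnum : HasDerivAt (fun z : ℝ => 4*z) 4 z := by
    simpa using (hasDerivAt_id z).const_mul (4:ℝ)
  have hden : HasDerivAt (fun z : ℝ => (1+z)^2) (2*(1+z)) z := by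
    simpa [Pi.pow_def] using ((hasDerivAt_id z).const_add (1:ℝ)).pow 2
  refine (hnum.fun_div hden (pow_ne_zero 2 hz)).congr_deriv ?_
  field_simp
  ring

lemma one_add_pos_of_mem_uIcc {z : ℝ} (hz : z ∈ Set.uIcc (0:ℝ) 1) : 0 < 1 + z := by
  rw [Set.uIcc_of_le zero_le_one] at hz
  linarith [hz.1]

lemma continuousOn_pow_mul_div (k : ℕ) :
    ContinuousOn (fun z : ℝ => (4*z/(1 + z)^2)^k * (1-z)/(1+z)^3) (Set.uIcc 0 1) := by
  have hne : ∀ z ∈ Set.uIcc (0:ℝ) 1, 1 + z ≠ 0 := fun z hz => (one_add_pos_of_mem_uIcc hz).ne'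
  refine ContinuousOn.div ?_ (by fun_prop) fun z hz => pow_ne_zero 3 (hne z hz)
  exact (((continuousOn_const.mul continuousOn_id).div (by fun_prop)
    fun z hz => pow_ne_zero 2 (hne z hz)).pow k).mul (by fun_prop)

lemma integral_pow_mul_div (k : ℕ) :
    ∫ z in (0:ℝ)..1, (4*z/(1 + z)^2)^k * (1-z)/(1+z)^3 = 1/(4*((k:ℝ)+1)) := by
  have hderiv : ∀ z ∈ Set.uIcc (0:ℝ) 1,
      HasDerivAt (fun z : ℝ => 4*z/(1+z)^2) (4*(1-z)/(1+z)^3) z :=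
    fun z hz => hasDerivAt_four_mul_div_one_add_sq (one_add_pos_of_mem_uIcc hz).ne'
  have hcont : ContinuousOn (fun z : ℝ => 4*(1-z)/(1+z)^3) (Set.uIcc 0 1) :=
    ContinuousOn.div (by fun_prop) (by fun_prop)
      fun z hz => pow_ne_zero 3 (one_add_pos_of_mem_uIcc hz).ne'
  have hsubst := integral_deriv_smul_comp hderiv hcont (g := fun t : ℝ => t^k / 4) (by fun_prop)
  calc ∫ z in (0:ℝ)..1, (4*z/(1 + z)^2)^k * (1-z)/(1+z)^3
      = ∫ z in (0:ℝ)..1,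
          (4*(1-z)/(1+z)^3) • ((fun t : ℝ => t^k/4) ∘ (fun z : ℝ => 4*z/(1+z)^2)) z := by
        refine integral_congr fun z _ => ?_
        simp only [Function.comp, smul_eq_mul]
        ring
    _ = ∫ t in (0:ℝ)..1, t^k / 4 := by rw [hsubst]; norm_num
    _ = 1/(4*((k:ℝ)+1)) := by
        rw [intervalIntegral.integral_div, integral_pow]
        field_simp
        ring

lemma integral_one_div_one_add : ∫ z in (0:ℝ)..1, 1/(1+z) = log 2 := by
  rw [integral_comp_add_left (fun u : ℝ => 1/u), integral_one_div_of_pos] <;> norm_num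

theorem stmt16_general (n : ℕ) :
    ∫ z in (0:ℝ)..1, (1/2 - (1/(1 + z)) * (4*z/(1 + z)^2) ^ n) / (1 - z)
      = (1/4) * (H n - Real.log 4) := by
  have hsplit : (∫ z in (0:ℝ)..1, (1/2 - (1/(1 + z)) * (4*z/(1 + z)^2) ^ n) / (1 - z))
      = ∫ z in (0:ℝ)..1,
          (-(1/2) * (1/(1+z)) + ∑ k ∈ Finset.range n, (4*z/(1 + z)^2)^k * (1-z)/(1+z)^3) := by
    refine integral_congr_ae ?_
    filter_upwards [volume.ae_ne 1] with z hz1 hz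
    rw [Set.uIoc_of_le zero_le_one] at hz
    exact div_one_sub_eq_sum n (by linarith [hz.1]) (sub_ne_zero.mpr (Ne.symm hz1))
  have hlog : IntervalIntegrable (fun z : ℝ => -(1/2) * (1/(1+z))) volume 0 1 :=
    (ContinuousOn.div continuousOn_const (by fun_prop)
      fun z hz => (one_add_pos_of_mem_uIcc hz).ne').intervalIntegrable.const_mul _
  have hsum := fun k (_ : k ∈ Finset.range n) =>
    (continuousOn_pow_mul_div k).intervalIntegrable (μ := volume)
  rw [hsplit, integral_add hlog
      (continuousOn_finsetSum _ fun k _ => continuousOn_pow_mul_div k).intervalIntegrable,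
    intervalIntegral.integral_const_mul,
    integral_one_div_one_add, integral_finsetSum hsum,
    Finset.sum_congr rfl fun k _ => integral_pow_mul_div k, H,
    show (4:ℝ) = 2^2 by norm_num, log_pow]
  simp only [one_div, mul_inv, ← Finset.mul_sum]
  ring

theorem stmt16 (n : ℕ) (hn : 1 ≤ n) :
    ∫ z in (0:ℝ)..1, (1/2 - (1/(1 + z)) * (4*z/(1 + z)^2) ^ n) / (1 - z)
      = (1/4) * (H n - Real.log 4) :=
  stmt16_general n
end
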